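/- arXiv:1412.8002 — 7 statements merged into one kernel-verified Lean document; each statement's English description precedes it below -/
import Mathlib

section
/- If G is a bipartite graph with parts X and Y, and L assigns to each vertex a finite list of colors (each of size at least 2) such that for every edge uv the lists L(u) and L(v) share at least two common colors, then G has a proper coloring f with f(v) ∈ L(v) for every vertex v. -/
/-! Colour every vertex of `X` with the least colour of its list and every vertex of `Y` with
the largest. If `u ∈ X` and `v ∈ Y` are adjacent, two common colours `a < b` give
`min L(u) ≤ a < b ≤ max L(v)`, so the endpoints of every edge receive different colours. -/

theorem Finset.min'_lt_max'_of_one_lt_card_inter {α : Type*} [LinearOrder α] [DecidableEq α]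
    {s t : Finset α} (hst : 1 < (s ∩ t).card) (hs : s.Nonempty) (ht : t.Nonempty) :
    s.min' hs < t.max' ht := by
  obtain ⟨a, ha, b, hb, hab⟩ := Finset.one_lt_card.mp hst
  rw [Finset.mem_inter] at ha hb
  rcases hab.lt_or_gt with hlt | hlt
  · exact (s.min'_le a ha.1).trans_lt (hlt.trans_le (t.le_max' b hb.2))
  · exact (s.min'_le b hb.1).trans_lt (hlt.trans_le (t.le_max' a ha.2))

theorem stmt_0_general {V : Type} (G : SimpleGraph V) (X Y : Set V)
    (hdisj : Disjoint X Y)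
    (hbip : ∀ u v, G.Adj u v → (u ∈ X ∧ v ∈ Y) ∨ (u ∈ Y ∧ v ∈ X))
    (L : V → Finset ℕ) (hL : ∀ v, 2 ≤ (L v).card)
    (hshare : ∀ u v, G.Adj u v → 2 ≤ (L u ∩ L v).card) :
    ∃ f : V → ℕ, (∀ v, f v ∈ L v) ∧ ∀ u v, G.Adj u v → f u ≠ f v := by
  classical
  have hne : ∀ v, (L v).Nonempty := fun v => Finset.card_pos.mp (by linarith [hL v])
  refine ⟨fun v => if v ∈ X then (L v).min' (hne v) else (L v).max' (hne v),
    fun v => ?_, fun u v huv => ?_⟩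
  · dsimp only
    split_ifs
    exacts [Finset.min'_mem _ _, Finset.max'_mem _ _]
  · dsimp only
    rcases hbip u v huv with ⟨hu, hv⟩ | ⟨hu, hv⟩
    · rw [if_pos hu, if_neg (hdisj.notMem_of_mem_right hv)]
      exact (Finset.min'_lt_max'_of_one_lt_card_inter (hshare u v huv) _ _).ne
    · rw [if_neg (hdisj.notMem_of_mem_right hu), if_pos hv]
      exact (Finset.min'_lt_max'_of_one_lt_card_inter (hshare v u huv.symm) _ _).ne'

/-- If G is a bipartite graph with parts X and Y, and L assigns each vertex a finite
list of at least 2 colors such that adjacent lists share at least two colors,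
then G has a proper coloring chosen from the lists. -/
theorem stmt_0 {V : Type} [Fintype V] (G : SimpleGraph V) (X Y : Set V)
    (hcover : ∀ v, v ∈ X ∨ v ∈ Y) (hdisj : Disjoint X Y)
    (hbip : ∀ u v, G.Adj u v → (u ∈ X ∧ v ∈ Y) ∨ (u ∈ Y ∧ v ∈ X))
    (L : V → Finset ℕ) (hL : ∀ v, 2 ≤ (L v).card)
    (hshare : ∀ u v, G.Adj u v → 2 ≤ (L u ∩ L v).card) :
    ∃ f : V → ℕ, (∀ v, f v ∈ L v) ∧ ∀ u v, G.Adj u v → f u ≠ f v :=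
  stmt_0_general G X Y hdisj hbip L hL hshare
end

section
/- Let G be a graph admitting a proper j-coloring, let k ≥ j, and let L be a k-list assignment on G such that the union of all lists has size at most j(k-1)/(j-1). Then G has a proper coloring chosen from the lists L. -/
/-!
Let `U` be the union of the lists, `m = |U|` and `s = m + 1 - k`. The bound on `|U|` says exactly
`j * s ≤ m`, so `U` contains `j` disjoint blocks of `s` colours, one per colour class of a proper
`j`-colouring. Every list has `k` elements and every block `s`, so by pigeonhole inside `U` each
list meets the block of its vertex's class; colouring each vertex from that intersection is proper
because adjacent vertices lie in different classes, hence take colours from disjoint blocks.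
-/

open Finset

theorem SimpleGraph.Coloring.exists_listColoring_of_forall_exists_mem {V α β : Type*}
    {G : SimpleGraph V} (C : G.Coloring α) (L : V → Finset β) (cls : β → α)
    (h : ∀ v, ∃ c ∈ L v, cls c = C v) :
    ∃ f : V → β, (∀ v, f v ∈ L v) ∧ ∀ u v, G.Adj u v → f u ≠ f v := by
  choose f hfL hf using h
  refine ⟨f, hfL, fun u v huv hne => C.valid huv ?_⟩
  rw [← hf u, ← hf v, hne]

theorem Finset.exists_forall_le_card_filter_eq {α β : Type*} [Fintype α] [Nonempty α]
    [DecidableEq α] (U : Finset β) (s : ℕ) (h : Fintype.card α * s ≤ #U) :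
    ∃ cls : β → α, ∀ a, s ≤ #{c ∈ U | cls c = a} := by
  classical
  obtain ⟨φ⟩ : Nonempty (α × Fin s ↪ U) :=
    Function.Embedding.nonempty_of_card_le (by simpa using h)
  set ψ : α × Fin s → β := fun p => φ p
  have hψ : ψ.Injective := Subtype.val_injective.comp φ.injective
  refine ⟨Function.extend ψ Prod.fst fun _ => Classical.arbitrary α, fun a => ?_⟩
  calc s = #(univ.image fun t => ψ (a, t)) := by
        rw [card_image_of_injective _ fun t t' htt' => by simpa using hψ htt', card_univ,
          Fintype.card_fin]
    _ ≤ _ := card_le_card fun c hc => by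
        obtain ⟨t, -, rfl⟩ := mem_image.mp hc
        simp [ψ, hψ.extend_apply]

theorem mul_add_one_sub_le_of_le_div {j k m : ℕ} (hj : 2 ≤ j)
    (h : (m : ℝ) ≤ j * ((k : ℝ) - 1) / ((j : ℝ) - 1)) : j * (m + 1 - k) ≤ m := by
  have hj' : (1 : ℝ) < j := by exact_mod_cast hj
  rw [le_div_iff₀ (by linarith)] at h
  rcases le_or_gt (m + 1) k with hkm | hkm
  · simp [Nat.sub_eq_zero_of_le hkm]
  · have : ((j * (m + 1 - k) : ℕ) : ℝ) ≤ m := by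
      push_cast [Nat.cast_sub hkm.le]
      linarith
    exact_mod_cast this

theorem stmt_1_general {V : Type} [Fintype V] (G : SimpleGraph V)
    (j k : ℕ) (hj : 2 ≤ j)
    (hcol : G.Colorable j)
    (L : V → Finset ℕ) (hL : ∀ v, (L v).card = k)
    (hU : ((Finset.univ.biUnion L).card : ℝ) ≤ ((j : ℝ) * ((k : ℝ) - 1)) / ((j : ℝ) - 1)) :
    ∃ f : V → ℕ, (∀ v, f v ∈ L v) ∧ ∀ u v, G.Adj u v → f u ≠ f v := by
  classical
  obtain ⟨C⟩ := hcol
  set U := univ.biUnion L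
  have hLU : ∀ v, L v ⊆ U := fun v => subset_biUnion_of_mem L (mem_univ v)
  have : Nonempty (Fin j) := ⟨⟨0, by omega⟩⟩
  obtain ⟨cls, hcls⟩ := U.exists_forall_le_card_filter_eq (α := Fin j) (#U + 1 - k)
    (by simpa using mul_add_one_sub_le_of_le_div hj hU)
  refine C.exists_listColoring_of_forall_exists_mem L cls fun v => ?_
  have hkU : #(L v) ≤ #U := card_le_card (hLU v)
  obtain ⟨c, hc⟩ :=
    inter_nonempty_of_card_lt_card_add_card (hLU v) (filter_subset (cls · = C v) U)
    (by have := hcls (C v); have := hL v; omega)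
  exact ⟨c, (mem_inter.mp hc).1, (mem_filter.mp (mem_inter.mp hc).2).2⟩

/-- If G is j-colorable, k ≥ j ≥ 2, and L is a k-list assignment whose union of lists
has size at most j(k-1)/(j-1), then G has a proper coloring chosen from L. -/
theorem stmt_1 {V : Type} [Fintype V] (G : SimpleGraph V)
    (j k : ℕ) (hj : 2 ≤ j) (hk : j ≤ k)
    (hcol : G.Colorable j)
    (L : V → Finset ℕ) (hL : ∀ v, (L v).card = k)
    (hU : ((Finset.univ.biUnion L).card : ℝ) ≤ ((j : ℝ) * ((k : ℝ) - 1)) / ((j : ℝ) - 1)) :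
    ∃ f : V → ℕ, (∀ v, f v ∈ L v) ∧ ∀ u v, G.Adj u v → f u ≠ f v :=
  stmt_1_general G j k hj hcol L hL hU
end

section
/- For every j ≥ 2 and k ≥ j, there exists a j-colorable graph G and a k-list assignment L with |⋃_v L(v)| = ⌊j(k-1)/(j-1)⌋ + 1 such that G has no proper coloring chosen from L. -/
/-!
Take `U = {0, …, m - 1}` with `m = ⌊j(k-1)/(j-1)⌋ + 1`, so that `(j-1)m > j(k-1)`, and let `G` be
the complete `j`-partite graph with one vertex per `k`-subset of `U` in each part, listed by
that subset. In a proper list coloring, the colors `Cᵢ` used on part `i` meet every `k`-subset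
of `U`, so `Cᵢ` misses fewer than `k` points of `U`; the `Cᵢ` are pairwise disjoint, hence
`j(m - k + 1) ≤ m`, which contradicts `(j-1)m > j(k-1)`.
-/

open Finset SimpleGraph

variable {V W α ι : Type*}

def SimpleGraph.IsListColoring (G : SimpleGraph V) (L : V → Finset α) (f : V → α) : Prop :=
  (∀ v, f v ∈ L v) ∧ ∀ u v, G.Adj u v → f u ≠ f v

theorem SimpleGraph.IsListColoring.of_iso {G : SimpleGraph V} {G' : SimpleGraph W}
    {L : V → Finset α} {f : W → α} (e : G ≃g G') (hf : G'.IsListColoring (L ∘ e.symm) f) :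
    G.IsListColoring L (f ∘ e) :=
  ⟨fun v => by simpa using hf.1 (e v), fun _ _ huv => hf.2 _ _ (e.map_adj_iff.2 huv)⟩

theorem Finset.biUnion_univ_comp_equiv [Fintype V] [Fintype W] [DecidableEq α]
    (L : V → Finset α) (e : W ≃ V) : univ.biUnion (L ∘ e) = univ.biUnion L := by
  ext x; simp [e.surjective.exists]

namespace Finset
variable [DecidableEq α]

theorem card_sdiff_lt_of_forall_inter_nonempty {U C : Finset α} {k : ℕ}
    (h : ∀ T ∈ U.powersetCard k, (T ∩ C).Nonempty) : #(U \ C) < k := by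
  by_contra! hk
  obtain ⟨T, hTC, rfl⟩ := exists_subset_card_eq hk
  obtain ⟨x, hx⟩ := h T (mem_powersetCard.2 ⟨hTC.trans sdiff_subset, rfl⟩)
  exact (mem_sdiff.1 (hTC (mem_inter.1 hx).1)).2 (mem_inter.1 hx).2

end Finset

namespace Nat
variable {j k m : ℕ}

theorem le_of_mul_sub_one_lt_sub_one_mul (h : j * (k - 1) < (j - 1) * m) : k ≤ m := by
  have : (j - 1) * (k - 1) < (j - 1) * m :=
    (Nat.mul_le_mul_right _ (sub_le j 1)).trans_lt h
  have := Nat.lt_of_mul_lt_mul_left this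
  omega

theorem lt_mul_add_one_sub_of_mul_sub_one_lt_sub_one_mul (h : j * (k - 1) < (j - 1) * m) :
    m < j * (m + 1 - k) := by
  have hkm := le_of_mul_sub_one_lt_sub_one_mul h
  obtain ⟨d, rfl⟩ : ∃ d, m = k + d := ⟨m - k, by omega⟩
  rw [show k + d + 1 - k = d + 1 by omega]
  rcases j with _ | i
  · simp at h
  rcases k with _ | k <;> simp only [Nat.add_sub_cancel] at h <;> nlinarith

end Nat

namespace SimpleGraph.completeMultipartiteGraph
variable [DecidableEq α]

theorem biUnion_powersetCard [Fintype ι] [Nonempty ι] {U : Finset α} {k : ℕ} (hk : k ≠ 0)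
    (hkU : k ≤ #U) :
    univ.biUnion (fun v : Σ _ : ι, U.powersetCard k => (v.2 : Finset α)) = U := by
  calc _ = (U.powersetCard k).biUnion id := by ext; simp
    _ = U := powersetCard_biUnion hk hkU

theorem card_mul_le_of_isListColoring [Fintype ι] {U : Finset α} {k : ℕ}
    {f : (Σ _ : ι, U.powersetCard k) → α}
    (hf : (completeMultipartiteGraph fun _ : ι => U.powersetCard k).IsListColoring (fun v => v.2) f) :
    Fintype.card ι * (#U + 1 - k) ≤ #U := by
  set C : ι → Finset α := fun i => univ.image fun T => f ⟨i, T⟩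
  have hCU : ∀ i, C i ⊆ U := fun i =>
    image_subset_iff.2 fun T _ => (mem_powersetCard.1 T.2).1 (hf.1 _)
  have hmeet : ∀ i, ∀ T ∈ U.powersetCard k, (T ∩ C i).Nonempty := fun i T hT =>
    ⟨f ⟨i, ⟨T, hT⟩⟩, mem_inter.2 ⟨hf.1 _, mem_image_of_mem _ (mem_univ _)⟩⟩
  have hdisj : ((univ : Finset ι) : Set ι).PairwiseDisjoint C := by
    intro i _ i' _ hii'
    rw [Function.onFun, Finset.disjoint_left]
    simp only [C, mem_image]
    rintro _ ⟨T, -, rfl⟩ ⟨T', -, hT'⟩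
    exact hf.2 ⟨i', T'⟩ ⟨i, T⟩ hii'.symm hT'
  calc Fintype.card ι * (#U + 1 - k) = ∑ _ : ι, (#U + 1 - k) := by simp
    _ ≤ ∑ i, #(C i) := sum_le_sum fun i _ => by
      have := card_sdiff_lt_of_forall_inter_nonempty (hmeet i)
      rw [card_sdiff_of_subset (hCU i)] at this
      omega
    _ = #(univ.biUnion C) := (card_biUnion hdisj).symm
    _ ≤ #U := card_le_card (biUnion_subset.2 fun i _ => hCU i)

end SimpleGraph.completeMultipartiteGraph

/-- Sharpness: for j ≥ 2 and k ≥ j, there is a j-colorable graph and a k-list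
assignment with union of size ⌊j(k-1)/(j-1)⌋ + 1 admitting no proper coloring. -/
theorem stmt_2 (j k : ℕ) (hj : 2 ≤ j) (hk : j ≤ k) :
    ∃ (n : ℕ) (G : SimpleGraph (Fin n)) (L : Fin n → Finset ℕ),
      G.Colorable j ∧ (∀ v, (L v).card = k) ∧
      (Finset.univ.biUnion L).card = j * (k - 1) / (j - 1) + 1 ∧
      ¬∃ f : Fin n → ℕ, (∀ v, f v ∈ L v) ∧ ∀ u v, G.Adj u v → f u ≠ f v := by
  set m := j * (k - 1) / (j - 1) + 1
  have hm : j * (k - 1) < (j - 1) * m := Nat.lt_mul_div_succ _ (by omega)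
  set G := completeMultipartiteGraph fun _ : Fin j => (range m).powersetCard k
  let e := G.overFinIso rfl
  refine ⟨_, G.overFin rfl, fun v => (e.symm v).2, ?_, fun v => ?_, ?_, ?_⟩
  · simpa using (completeMultipartiteGraph.colorable _).of_hom e.symm.toHom
  · exact (mem_powersetCard.1 (e.symm v).2.2).2
  · have : Nonempty (Fin j) := ⟨⟨0, by omega⟩⟩
    have hkm := Nat.le_of_mul_sub_one_lt_sub_one_mul hm
    have hU : univ.biUnion (fun v => ((e.symm v).2 : Finset ℕ)) = range m :=
      (biUnion_univ_comp_equiv _ e.symm.toEquiv).trans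
        (completeMultipartiteGraph.biUnion_powersetCard (by omega) (by simpa using hkm))
    rw [hU, card_range]
  · rintro ⟨f, hf⟩
    have hle :=
      completeMultipartiteGraph.card_mul_le_of_isListColoring (IsListColoring.of_iso e hf)
    rw [Fintype.card_fin, card_range] at hle
    exact (Nat.lt_mul_add_one_sub_of_mul_sub_one_lt_sub_one_mul hm).not_ge hle
end

section
/- For all positive integers d and r, there exists a bipartite graph G of girth at least 4 (i.e., a simple bipartite graph) consisting of a complete d-ary rooted tree of height 2r+1 together with, for each leaf, r additional edges joining that leaf to r of its ancestors in the tree. Moreover, height 2r+1 is the minimum possible: no such graph exists on a complete d-ary tree of height less than 2r+1 when d ≥ 1. -/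
/-!
Colouring a vertex by the parity of its depth is a proper colouring of the tree, and every
2-colouring of the tree is of this form; so an augmented tree is bipartite exactly when every
augmenting edge joins a leaf to an ancestor at odd distance. At height `2r + 1` the ancestors at
depths `0, 2, …, 2r - 2` supply `r` such edges. At height `m ≤ 2r` a leaf has fewer than `r`
ancestors at odd distance at least `2`, since distinct ancestors of a leaf have distinct depths.
-/

open SimpleGraph

theorem SimpleGraph.Colorable.odd_length_of_adj {V : Type*} {G : SimpleGraph V}
    (hG : G.Colorable 2) {u v : V} (h : G.Adj u v) (p : G.Walk u v) : Odd p.length := by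
  obtain ⟨c⟩ := hG
  let c' : G.Coloring Bool := recolorOfEquiv G finTwoEquiv c
  rw [c'.odd_length_iff_not_congr p]
  have := c'.valid h
  revert this
  cases c' u <;> cases c' v <;> simp

section AugmentedTree

variable {α : Type*} {m : ℕ}

/-- The vertices of the complete `α`-ary tree of height `m`: a vertex is the word of child
indices on the path from the root, and its depth is the length of that word. -/
abbrev TreeNode (α : Type*) (m : ℕ) := {l : List α // l.length ≤ m}

def augmentedTree (aug : TreeNode α m → Finset (TreeNode α m)) : SimpleGraph (TreeNode α m) :=
  fromRel fun x y => (∃ a, y.val = x.val ++ [a]) ∨ (x.val.length = m ∧ y ∈ aug x)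

def IsAugmentation (r : ℕ) (aug : TreeNode α m → Finset (TreeNode α m)) : Prop :=
  ∀ v : TreeNode α m, v.val.length = m →
    (aug v).card = r ∧ ∀ x ∈ aug v, x.val <+: v.val ∧ x.val.length + 1 < v.val.length

variable {aug : TreeNode α m → Finset (TreeNode α m)}

theorem augmentedTree_adj_of_eq_append {x y : TreeNode α m} {a : α}
    (h : y.val = x.val ++ [a]) : (augmentedTree aug).Adj x y := by
  refine (fromRel_adj _ x y).mpr ⟨fun hxy => ?_, Or.inl (Or.inl ⟨a, h⟩)⟩
  have := congrArg List.length h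
  simp [hxy] at this

theorem exists_walk_of_eq_append (x : TreeNode α m) (t : List α) :
    ∀ y : TreeNode α m, y.val = x.val ++ t →
      ∃ p : (augmentedTree aug).Walk x y, p.length = t.length := by
  induction t using List.reverseRecOn with
  | nil =>
    intro y hy
    obtain rfl : y = x := Subtype.ext (by simpa using hy)
    exact ⟨Walk.nil, rfl⟩
  | append_singleton s a ih =>
    intro y hy
    have hlen : (x.val ++ s).length ≤ m := by
      have := congrArg List.length hy
      simp only [List.length_append, List.length_singleton] at this ⊢
      have := y.2
      omega
    obtain ⟨p, hp⟩ := ih ⟨x.val ++ s, hlen⟩ rfl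
    refine ⟨p.concat (augmentedTree_adj_of_eq_append (a := a) (by simp [hy])), ?_⟩
    simp [hp]

/-- The tree path from the ancestor to the leaf closes the augmenting edge into a cycle, which
must be even. -/
theorem length_mod_two_ne_of_colorable (hG : (augmentedTree aug).Colorable 2)
    {v x : TreeNode α m} (hv : v.val.length = m) (hx : x ∈ aug v) (hpre : x.val <+: v.val)
    (hlt : x.val.length < m) : x.val.length % 2 ≠ m % 2 := by
  obtain ⟨t, ht⟩ := hpre
  obtain ⟨p, hp⟩ := exists_walk_of_eq_append (aug := aug) x t v ht.symm
  have hadj : (augmentedTree aug).Adj x v :=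
    ((fromRel_adj _ v x).mpr ⟨fun h => by subst h; omega, Or.inl (Or.inr ⟨hv, hx⟩)⟩).symm
  have hodd := Nat.odd_iff.mp (hp ▸ hG.odd_length_of_adj hadj p)
  have := congrArg List.length ht
  simp only [List.length_append] at this
  omega

theorem colorable_two_of_length_mod_two_ne
    (h : ∀ v : TreeNode α m, v.val.length = m → ∀ x ∈ aug v, x.val.length % 2 ≠ m % 2) :
    (augmentedTree aug).Colorable 2 := by
  refine ⟨Coloring.mk (fun v => ⟨v.val.length % 2, Nat.mod_lt _ two_pos⟩) fun {x y} hxy => ?_⟩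
  rw [augmentedTree, fromRel_adj] at hxy
  simp only [ne_eq, Fin.mk.injEq]
  rcases hxy.2 with (⟨a, ha⟩ | ⟨hx, hy⟩) | (⟨a, ha⟩ | ⟨hy, hx⟩)
  · simp only [ha, List.length_append, List.length_singleton]; omega
  · rw [hx]; exact (h x hx y hy).symm
  · simp only [ha, List.length_append, List.length_singleton]; omega
  · rw [hy]; exact h y hy x hx

/-- Distinct ancestors of a leaf have distinct depths, and only `(m - 1) / 2` depths below `m - 1`
have the parity opposite to `m`. -/
theorem card_le_of_length_mod_two_ne {v : TreeNode α m} (hv : v.val.length = m)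
    (s : Finset (TreeNode α m))
    (hs : ∀ x ∈ s, x.val <+: v.val ∧ x.val.length + 1 < m ∧ x.val.length % 2 ≠ m % 2) :
    s.card ≤ (m - 1) / 2 := by
  have hmaps : ∀ x ∈ s, x.val.length / 2 ∈ Finset.range ((m - 1) / 2) := by
    intro x hx
    obtain ⟨-, hlt, hpar⟩ := hs x hx
    rw [Finset.mem_range]
    omega
  have hinj : Set.InjOn (fun x : TreeNode α m => x.val.length / 2) s := by
    intro x hx y hy hxy
    obtain ⟨hxv, -, hx⟩ := hs x hx
    obtain ⟨hyv, -, hy⟩ := hs y hy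
    have hlen : x.val.length = y.val.length := by simp only at hxy; omega
    exact Subtype.ext <| by
      rw [List.prefix_iff_eq_take.mp hxv, List.prefix_iff_eq_take.mp hyv, hlen]
  simpa using Finset.card_le_card_of_injOn _ hmaps hinj

theorem not_colorable_two_of_lt [Nonempty α] {r : ℕ} (hr : 1 ≤ r) (hm : m < 2 * r + 1)
    (haug : IsAugmentation r aug) : ¬(augmentedTree aug).Colorable 2 := by
  intro hG
  obtain ⟨a⟩ := ‹Nonempty α›
  let v : TreeNode α m := ⟨List.replicate m a, by simp⟩
  have hv : v.val.length = m := List.length_replicate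
  obtain ⟨hcard, hanc⟩ := haug v hv
  have := card_le_of_length_mod_two_ne hv (aug v) fun x hx => by
    obtain ⟨hpre, hlt⟩ := hanc x hx
    rw [hv] at hlt
    exact ⟨hpre, hlt, length_mod_two_ne_of_colorable hG hv hx hpre (by omega)⟩
  omega

variable [DecidableEq α]

def evenAncestors (r : ℕ) (v : TreeNode α m) : Finset (TreeNode α m) :=
  (Finset.range r).image fun k => ⟨v.val.take (2 * k), (List.length_take_le' _ _).trans v.2⟩

theorem isAugmentation_evenAncestors (r : ℕ) :
    IsAugmentation r (evenAncestors (α := α) (m := 2 * r + 1) r) := by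
  intro v hv
  constructor
  · rw [evenAncestors, Finset.card_image_of_injOn, Finset.card_range]
    intro k hk l hl hkl
    have := congrArg (List.length ∘ Subtype.val) hkl
    simp only [Finset.coe_range, Set.mem_Iio] at hk hl
    simp only [Function.comp_apply, List.length_take, hv] at this
    omega
  · simp only [evenAncestors, Finset.mem_image, Finset.mem_range]
    rintro _ ⟨k, hk, rfl⟩
    refine ⟨List.take_prefix _ _, ?_⟩
    simp only [List.length_take, hv]
    omega

theorem colorable_two_evenAncestors (r : ℕ) :
    (augmentedTree (evenAncestors (α := α) (m := 2 * r + 1) r)).Colorable 2 := by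
  refine colorable_two_of_length_mod_two_ne fun v hv x hx => ?_
  simp only [evenAncestors, Finset.mem_image, Finset.mem_range] at hx
  obtain ⟨k, hk, rfl⟩ := hx
  simp only [List.length_take, hv]
  omega

end AugmentedTree

/-- m(d,r,4) = 2r+1: for all d,r ≥ 1 there is a bipartite (hence girth ≥ 4)
r-augmented complete d-ary tree of height 2r+1 (vertices = lists over Fin d of
length ≤ 2r+1; tree edges join a vertex to its children; each leaf gets r extra
edges to non-parent proper ancestors), and no such graph exists with height
less than 2r+1. -/
theorem stmt_4 (d r : ℕ) (hd : 1 ≤ d) (hr : 1 ≤ r) :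
    (∃ aug : {l : List (Fin d) // l.length ≤ 2 * r + 1} →
        Finset {l : List (Fin d) // l.length ≤ 2 * r + 1},
      (∀ v, v.val.length = 2 * r + 1 → (aug v).card = r ∧
        ∀ x ∈ aug v, x.val <+: v.val ∧ x.val.length + 1 < v.val.length) ∧
      (SimpleGraph.fromRel (fun x y =>
        (∃ a : Fin d, y.val = x.val ++ [a]) ∨
        (x.val.length = 2 * r + 1 ∧ y ∈ aug x))).Colorable 2) ∧
    (∀ m, m < 2 * r + 1 →
      ¬∃ aug : {l : List (Fin d) // l.length ≤ m} →
          Finset {l : List (Fin d) // l.length ≤ m},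
        (∀ v, v.val.length = m → (aug v).card = r ∧
          ∀ x ∈ aug v, x.val <+: v.val ∧ x.val.length + 1 < v.val.length) ∧
        (SimpleGraph.fromRel (fun x y =>
          (∃ a : Fin d, y.val = x.val ++ [a]) ∨
          (x.val.length = m ∧ y ∈ aug x))).Colorable 2) := by
  have : Nonempty (Fin d) := ⟨⟨0, hd⟩⟩
  exact ⟨⟨evenAncestors r, isAugmentation_evenAncestors r, colorable_two_evenAncestors r⟩,
    fun _ hm ⟨_, haug, hG⟩ => not_colorable_two_of_lt hr hm haug hG⟩
end

section
/- The graph consisting of two cycles of even length g ≥ 4 sharing exactly one vertex is bipartite, has girth g, is not 2-choosable, and every proper subgraph of it has average degree at most 2. -/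
def Choosable {V : Type} (G : SimpleGraph V) (k : ℕ) : Prop :=
  ∀ L : V → Finset ℕ, (∀ v, (L v).card = k) →
    ∃ f : V → ℕ, (∀ v, f v ∈ L v) ∧ ∀ u v, G.Adj u v → f u ≠ f v

/-!
Colouring each vertex by the parity of its position on its cycle is consistent, since `u` sits at
the even positions `0` and `g` of both cycles. A cycle of `G` can switch from one of the two cycles
to the other only at `u`, which it visits once, so it lies in one of them, and a cycle contained in
a cycle is all of it; hence every cycle has length `g`. For the lists, `u` gets `{1, 2}` and each
colour of `u` is defeated along one of the two cycles. A proper subgraph misses an edge of one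
cycle; cutting that cycle there charges its remaining edges to distinct vertices other than `u`,
and the edges of the other cycle to their later endpoints, so there are at most as many edges as
vertices.
-/

namespace SimpleGraph.Walk

variable {V : Type*} {G : SimpleGraph V} {u : V}

lemma exists_getVert_of_mem_edges {v : V} {p : G.Walk u v} {e : Sym2 V} (he : e ∈ p.edges) :
    ∃ i < p.length, s(p.getVert i, p.getVert (i + 1)) = e := by
  obtain ⟨i, hi, rfl⟩ := List.mem_iff_getElem.mp he
  exact ⟨i, by simpa using hi, (getElem_edges hi).symm⟩

lemma IsCycle.even_iff_of_getVert_eq {c : G.Walk u u} (hc : c.IsCycle) (he : Even c.length)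
    {i j : ℕ} (hi : i ≤ c.length) (hj : j ≤ c.length) (h : c.getVert i = c.getVert j) :
    Even i ↔ Even j := by
  have even_of_eq_start : ∀ k ≤ c.length, c.getVert k = u → Even k := fun k hk hku => by
    rcases (hc.getVert_endpoint_iff hk).mp hku with rfl | rfl
    exacts [Even.zero, he]
  by_cases hu : c.getVert i = u
  · exact iff_of_true (even_of_eq_start i hi hu) (even_of_eq_start j hj (h ▸ hu))
  · have hi0 : i ≠ 0 := by rintro rfl; exact hu c.getVert_zero
    have hj0 : j ≠ 0 := by rintro rfl; exact hu (h.trans c.getVert_zero)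
    rw [hc.getVert_injOn ⟨by omega, hi⟩ ⟨by omega, hj⟩ h]

lemma IsCycle.exists_adj {c : G.Walk u u} (hc : c.IsCycle) {v : V} (hv : v ∈ c.support) :
    ∃ w, G.Adj v w := by
  obtain ⟨w, hw⟩ := Set.nonempty_of_ncard_ne_zero
    (by rw [hc.ncard_neighborSet_toSubgraph_eq_two hv]; decide)
  exact ⟨w, hw.adj_sub⟩

lemma IsCycle.length_le_of_edges_subset {c : G.Walk u u} {a : V} {w : G.Walk a a}
    (hc : c.IsCycle) (hw : w.IsCycle) (h : w.edges ⊆ c.edges) : c.length ≤ w.length := by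
  have hle : w.toSubgraph ≤ c.toSubgraph := by
    rw [toSubgraph_le_iff hw.not_nil, edgeSet_toSubgraph]
    exact fun e he => h he
  -- A vertex of `w` has two neighbours in `w` and two in `c`, so `w` contains all of its `c`-edges.
  have hnbr : ∀ x ∈ w.support, c.toSubgraph.neighborSet x ⊆ w.toSubgraph.neighborSet x := by
    intro x hx
    have hxc : x ∈ c.support := by simpa using hle.1 (by simpa using hx)
    refine (Set.eq_of_subset_of_ncard_le (Subgraph.neighborSet_subset_of_subgraph hle x) ?_
      (finite_neighborSet_toSubgraph c)).ge
    rw [hc.ncard_neighborSet_toSubgraph_eq_two hxc, hw.ncard_neighborSet_toSubgraph_eq_two hx]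
  have hstep : ∀ i j, i ≤ j → j ≤ c.length → c.getVert i ∈ w.support →
      c.getVert j ∈ w.support := by
    intro i j hij hj hi
    induction j, hij using Nat.le_induction with
    | base => exact hi
    | succ j _ ih =>
      have hadj := hnbr _ (ih (by omega)) (c.toSubgraph_adj_getVert (by omega : j < c.length))
      exact mem_support_of_adj_toSubgraph hadj.symm
  obtain ⟨j, hj, hjc⟩ := mem_support_iff_exists_getVert.mp
    (by simpa using hle.1 w.start_mem_verts_toSubgraph : a ∈ c.support)
  have hu : c.getVert 0 ∈ w.support := by
    simpa using hstep j c.length hjc le_rfl (hj ▸ w.start_mem_support)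
  have hcw : c.edges ⊆ w.edges := by
    intro e he
    obtain ⟨i, hi, rfl⟩ := exists_getVert_of_mem_edges he
    rw [← adj_toSubgraph_iff_mem_edges]
    exact hnbr _ (hstep 0 i (Nat.zero_le i) hi.le hu) (c.toSubgraph_adj_getVert hi)
  simpa using (hc.edges_nodup.subperm hcw).length_le

lemma IsCycle.length_eq_of_edges_subset {c : G.Walk u u} {a : V} {w : G.Walk a a}
    (hc : c.IsCycle) (hw : w.IsCycle) (h : w.edges ⊆ c.edges) : w.length = c.length := by
  refine le_antisymm ?_ (hc.length_le_of_edges_subset hw h)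
  simpa using (hw.edges_nodup.subperm h).length_le

lemma edges_subset_or_edges_subset {x₁ y₁ x₂ y₂ : V} {c₁ : G.Walk x₁ y₁} {c₂ : G.Walk x₂ y₂}
    (hshare : ∀ v, v ∈ c₁.support → v ∈ c₂.support → v = u)
    (hedges : ∀ e ∈ G.edgeSet, e ∈ c₁.edges ∨ e ∈ c₂.edges) {a b : V} (p : G.Walk a b)
    (hp : ∀ i, 0 < i → i < p.length → p.getVert i ≠ u) :
    p.edges ⊆ c₁.edges ∨ p.edges ⊆ c₂.edges := by
  induction p with
  | nil => simp
  | @cons a b _ hab q ih =>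
    have ihq := ih fun i hi0 hi => by simpa using hp (i + 1) (by omega) (by simp; omega)
    rcases q with _ | ⟨hbc, r⟩
    · rcases hedges s(a, b) hab with h | h <;> simp [h]
    have hb : b ≠ u := by simpa using hp 1 one_pos (by simp)
    rcases hedges s(a, b) hab with h | h <;> rcases ihq with hq | hq
    · exact .inl (List.cons_subset.mpr ⟨h, hq⟩)
    · exact absurd (hshare b (c₁.snd_mem_support_of_mem_edges h)
        (c₂.fst_mem_support_of_mem_edges (hq List.mem_cons_self))) hb
    · exact absurd (hshare b (c₁.fst_mem_support_of_mem_edges (hq List.mem_cons_self))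
        (c₂.snd_mem_support_of_mem_edges h)) hb
    · exact .inr (List.cons_subset.mpr ⟨h, hq⟩)

lemma IsCycle.length_eq_or_length_eq {a : V} {w : G.Walk a a} (hw : w.IsCycle)
    {c₁ c₂ : G.Walk u u} (h₁ : c₁.IsCycle) (h₂ : c₂.IsCycle)
    (hshare : ∀ v, v ∈ c₁.support → v ∈ c₂.support → v = u)
    (hedges : ∀ e ∈ G.edgeSet, e ∈ c₁.edges ∨ e ∈ c₂.edges) :
    w.length = c₁.length ∨ w.length = c₂.length := by
  classical
  suffices key : ∀ {b : V} (w : G.Walk b b), w.IsCycle →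
      (∀ i, 0 < i → i < w.length → w.getVert i ≠ u) →
      w.length = c₁.length ∨ w.length = c₂.length by
    by_cases hu : u ∈ w.support
    · rw [← length_rotate w u hu]
      refine key _ (hw.rotate hu) fun i hi0 hi h => ?_
      have := ((hw.rotate hu).getVert_endpoint_iff hi.le).mp h
      omega
    · exact key w hw fun i _ _ h => hu (h ▸ w.getVert_mem_support i)
  intro b w hw hint
  rcases edges_subset_or_edges_subset hshare hedges w hint with h | h
  exacts [.inl (h₁.length_eq_of_edges_subset hw h), .inr (h₂.length_eq_of_edges_subset hw h)]

lemma apply_getVert_eq_ite_even {a b : V} {w : G.Walk a b} {f : V → ℕ}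
    (hf : ∀ x y, G.Adj x y → f x ≠ f y) {p q m : ℕ} (hm : m ≤ w.length)
    (hpq : ∀ i, 1 ≤ i → i ≤ m → f (w.getVert i) = p ∨ f (w.getVert i) = q)
    (h₁ : f (w.getVert 1) = p) {i : ℕ} (hi : 1 ≤ i) (him : i ≤ m) :
    f (w.getVert i) = if Even i then q else p := by
  induction i, hi using Nat.le_induction with
  | base => simpa using h₁
  | succ i hi ih =>
    have hne := hf _ _ (w.adj_getVert_succ (by omega : i < w.length))
    rw [ih (by omega)] at hne
    rcases hpq (i + 1) (by omega) him with h | h <;> rw [h] at hne ⊢ <;>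
      by_cases he : Even i <;> simp_all [Nat.even_add_one]

section cycleLists

variable [DecidableEq V]

def cycleLists (c : G.Walk u u) (a p q : ℕ) (v : V) : Finset ℕ :=
  if v = c.snd then {a, p} else if v = c.penultimate then {a, q} else {p, q}

lemma IsCycle.not_proper_of_mem_cycleLists {c : G.Walk u u} (hc : c.IsCycle)
    (he : Even c.length) {f : V → ℕ} {p q : ℕ}
    (hL : ∀ v ∈ c.support, v ≠ u → f v ∈ cycleLists c (f u) p q v) :
    ¬ ∀ x y, G.Adj x y → f x ≠ f y := by
  intro hf
  have h4 : 4 ≤ c.length := by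
    obtain ⟨k, hk⟩ := he
    have := hc.three_le_length
    omega
  have hne_start : ∀ i, 0 < i → i < c.length → c.getVert i ≠ u := fun i hi0 hi h => by
    have := (hc.getVert_endpoint_iff hi.le).mp h
    omega
  have hne : ∀ i j, 1 ≤ i → i ≤ c.length → 1 ≤ j → j ≤ c.length → i ≠ j →
      c.getVert i ≠ c.getVert j := fun i j hi hi' hj hj' hij h =>
    hij (hc.getVert_injOn ⟨hi, hi'⟩ ⟨hj, hj'⟩ h)
  have hsnd : f c.snd = p := by
    have hmem : f c.snd ∈ ({f u, p} : Finset ℕ) := by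
      simpa [cycleLists] using hL _ (c.getVert_mem_support 1) (hne_start 1 one_pos (by omega))
    rw [Finset.mem_insert, Finset.mem_singleton] at hmem
    exact hmem.resolve_left (hf _ _ (c.adj_snd hc.not_nil)).symm
  have hmid : ∀ i, 1 ≤ i → i ≤ c.length - 2 →
      f (c.getVert i) = p ∨ f (c.getVert i) = q := by
    intro i hi1 hi2
    obtain rfl | hi1 := eq_or_lt_of_le hi1
    · exact .inl hsnd
    have hmem := hL _ (c.getVert_mem_support i) (hne_start i (by omega) (by omega))
    simpa [cycleLists, penultimate, hne i 1 (by omega) (by omega) le_rfl (by omega) (by omega),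
      hne i (c.length - 1) (by omega) (by omega) (by omega) (by omega) (by omega)] using hmem
  have hbefore : f (c.getVert (c.length - 2)) = q := by
    have := apply_getVert_eq_ite_even hf (by omega) hmid hsnd (by omega) le_rfl
    rwa [if_pos ((Nat.even_sub (by omega)).mpr (by simp [he]))] at this
  have hpen : f c.penultimate = f u := by
    have hmem : f c.penultimate ∈ ({f u, q} : Finset ℕ) := by
      simpa [cycleLists, hc.snd_ne_penultimate.symm] using
        hL _ (c.getVert_mem_support _) (hne_start (c.length - 1) (by omega) (by omega))
    have hadj := hf _ _ (c.adj_getVert_succ (by omega : c.length - 2 < c.length))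
    rw [show c.length - 2 + 1 = c.length - 1 by omega, hbefore] at hadj
    rw [Finset.mem_insert, Finset.mem_singleton] at hmem
    exact hmem.resolve_right hadj.symm
  exact hf _ _ (c.adj_penultimate hc.not_nil) hpen

end cycleLists

lemma ncard_inter_edges_le {v : V} {c : G.Walk u v} {E : Set (Sym2 V)} {T : Set V}
    (hT : T.Finite) (φ : ℕ → V)
    (hφ : Set.InjOn φ {i | i < c.length ∧ s(c.getVert i, c.getVert (i + 1)) ∈ E})
    (hmaps : Set.MapsTo φ {i | i < c.length ∧ s(c.getVert i, c.getVert (i + 1)) ∈ E} T) :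
    (E ∩ {e | e ∈ c.edges}).ncard ≤ T.ncard := by
  set I := {i | i < c.length ∧ s(c.getVert i, c.getVert (i + 1)) ∈ E}
  have hI : I.Finite := (Set.finite_Iio c.length).subset fun i hi => hi.1
  calc (E ∩ {e | e ∈ c.edges}).ncard
      ≤ ((fun i => s(c.getVert i, c.getVert (i + 1))) '' I).ncard := by
        refine Set.ncard_le_ncard (fun e ⟨heE, hec⟩ => ?_) (hI.image _)
        obtain ⟨i, hi, rfl⟩ := exists_getVert_of_mem_edges hec
        exact ⟨i, ⟨hi, heE⟩, rfl⟩
    _ ≤ I.ncard := Set.ncard_image_le hI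
    _ = (φ '' I).ncard := hφ.ncard_image.symm
    _ ≤ T.ncard := Set.ncard_le_ncard hmaps.image_subset hT

lemma IsCycle.ncard_edgeSet_inter_le {c : G.Walk u u} (hc : c.IsCycle) (H : G.Subgraph) :
    (H.edgeSet ∩ {e | e ∈ c.edges}).ncard ≤ (H.verts ∩ {v | v ∈ c.support}).ncard := by
  refine c.ncard_inter_edges_le ((List.finite_toSet _).subset Set.inter_subset_right)
    (fun i => c.getVert (i + 1)) (fun i hi j hj h => ?_) fun i ⟨_, hiH⟩ =>
      ⟨H.mem_verts_of_mem_edge hiH (Sym2.mem_mk_right _ _), c.getVert_mem_support _⟩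
  have := hc.getVert_injOn ⟨by omega, hi.1⟩ ⟨by omega, hj.1⟩ h
  omega

lemma IsCycle.ncard_edgeSet_inter_le_of_notMem {c : G.Walk u u} (hc : c.IsCycle)
    {H : G.Subgraph} {e₀ : Sym2 V} (he₀ : e₀ ∈ c.edges) (hH : e₀ ∉ H.edgeSet) :
    (H.edgeSet ∩ {e | e ∈ c.edges}).ncard ≤ ((H.verts ∩ {v | v ∈ c.support}) \ {u}).ncard := by
  obtain ⟨k, hk, rfl⟩ := exists_getVert_of_mem_edges he₀
  have hik : ∀ {i}, s(c.getVert i, c.getVert (i + 1)) ∈ H.edgeSet → i ≠ k := by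
    rintro i hi rfl
    exact hH hi
  -- Cut at the missing `k`-th edge: earlier edges go to their later endpoint and later edges to
  -- their earlier endpoint, so the positions used are `1, …, length - 1` and `u` is never hit.
  set σ : ℕ → ℕ := fun i => if i < k then i + 1 else i
  have hσ : ∀ {i}, i < c.length → i ≠ k →
      1 ≤ σ i ∧ σ i < c.length ∧ (σ i = i ∨ σ i = i + 1) := by
    intro i hi hik
    simp only [σ]
    split_ifs <;> omega
  refine c.ncard_inter_edges_le ((List.finite_toSet _).subset
      (Set.sdiff_subset.trans Set.inter_subset_right))
    (fun i => c.getVert (σ i)) (fun i hi j hj h => ?_) fun i hi => ?_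
  · obtain ⟨hi1, hin, -⟩ := hσ hi.1 (hik hi.2)
    obtain ⟨hj1, hjn, -⟩ := hσ hj.1 (hik hj.2)
    have hσij : σ i = σ j := hc.getVert_injOn ⟨hi1, hin.le⟩ ⟨hj1, hjn.le⟩ h
    have := hik hi.2
    have := hik hj.2
    simp only [σ] at hσij
    split_ifs at hσij <;> omega
  · obtain ⟨hi1, hin, hσi⟩ := hσ hi.1 (hik hi.2)
    refine ⟨⟨H.mem_verts_of_mem_edge hi.2 ?_, c.getVert_mem_support _⟩, fun hu => ?_⟩
    · rcases hσi with h | h <;> simp [h]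
    · have := (hc.getVert_endpoint_iff hin.le).mp hu
      omega

end SimpleGraph.Walk

namespace SimpleGraph

open Walk

variable {V : Type*} {G : SimpleGraph V} {u : V}

lemma Subgraph.exists_notMem_edgeSet_of_ne_top {H : G.Subgraph} (hG : ∀ v, ∃ w, G.Adj v w)
    (hH : H ≠ ⊤) : ∃ e ∈ G.edgeSet, e ∉ H.edgeSet := by
  by_contra! h
  refine hH (Subgraph.ext (Set.eq_univ_of_forall fun v => ?_) ?_)
  · obtain ⟨w, hvw⟩ := hG v
    exact H.edge_vert (h s(v, w) hvw)
  · funext x y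
    exact propext ⟨fun hxy => H.adj_sub hxy, fun hxy => h s(x, y) hxy⟩

section TwoCycles

variable {c₁ c₂ : G.Walk u u}

def evenPositions (c₁ c₂ : G.Walk u u) : Set V :=
  {v | ∃ i, Even i ∧ (c₁.getVert i = v ∨ c₂.getVert i = v)}

lemma evenPositions_comm : evenPositions c₁ c₂ = evenPositions c₂ c₁ := by
  ext
  simp [evenPositions, or_comm]

lemma getVert_mem_evenPositions_iff (h₁ : c₁.IsCycle) (he₁ : Even c₁.length)
    (hshare : ∀ v, v ∈ c₁.support → v ∈ c₂.support → v = u) {k : ℕ} (hk : k ≤ c₁.length) :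
    c₁.getVert k ∈ evenPositions c₁ c₂ ↔ Even k := by
  have hstart : c₁.getVert k = u → Even k := fun h =>
    (h₁.even_iff_of_getVert_eq he₁ (Nat.zero_le _) hk (by rw [getVert_zero, h])).mp Even.zero
  refine ⟨?_, fun hk' => ⟨k, hk', .inl rfl⟩⟩
  rintro ⟨i, hi, h | h⟩
  · by_cases hin : i ≤ c₁.length
    · exact (h₁.even_iff_of_getVert_eq he₁ hin hk h).mp hi
    · exact hstart (h ▸ c₁.getVert_of_length_le (by omega))
  · exact hstart (hshare _ (c₁.getVert_mem_support k) (h ▸ c₂.getVert_mem_support i))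

lemma mem_evenPositions_iff_notMem_of_mem_edges (h₁ : c₁.IsCycle) (he₁ : Even c₁.length)
    (hshare : ∀ v, v ∈ c₁.support → v ∈ c₂.support → v = u) {x y : V}
    (hxy : s(x, y) ∈ c₁.edges) :
    x ∈ evenPositions c₁ c₂ ↔ y ∉ evenPositions c₁ c₂ := by
  obtain ⟨i, hi, hs⟩ := exists_getVert_of_mem_edges hxy
  have key : c₁.getVert i ∈ evenPositions c₁ c₂ ↔ c₁.getVert (i + 1) ∉ evenPositions c₁ c₂ := by
    rw [getVert_mem_evenPositions_iff h₁ he₁ hshare hi.le,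
      getVert_mem_evenPositions_iff h₁ he₁ hshare hi, Nat.even_add_one, not_not]
  rcases Sym2.eq_iff.mp hs with ⟨rfl, rfl⟩ | ⟨rfl, rfl⟩ <;> tauto

theorem colorable_two_of_even_cycles (h₁ : c₁.IsCycle) (h₂ : c₂.IsCycle)
    (he₁ : Even c₁.length) (he₂ : Even c₂.length)
    (hshare : ∀ v, v ∈ c₁.support → v ∈ c₂.support → v = u)
    (hedges : ∀ e ∈ G.edgeSet, e ∈ c₁.edges ∨ e ∈ c₂.edges) :
    G.Colorable 2 := by
  classical
  have hsep : ∀ x y, G.Adj x y → (x ∈ evenPositions c₁ c₂ ↔ y ∉ evenPositions c₁ c₂) := by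
    intro x y hxy
    rcases hedges s(x, y) hxy with h | h
    · exact mem_evenPositions_iff_notMem_of_mem_edges h₁ he₁ hshare h
    · rw [evenPositions_comm]
      exact mem_evenPositions_iff_notMem_of_mem_edges h₂ he₂ (fun v hv₂ hv₁ => hshare v hv₁ hv₂) h
  let C : G.Coloring Bool := Coloring.mk (fun v => decide (v ∈ evenPositions c₁ c₂))
    fun {x y} hxy => by
      simp only [ne_eq, decide_eq_decide]
      have := hsep x y hxy
      tauto
  simpa using C.colorable

theorem girth_eq_min_length (h₁ : c₁.IsCycle) (h₂ : c₂.IsCycle)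
    (hshare : ∀ v, v ∈ c₁.support → v ∈ c₂.support → v = u)
    (hedges : ∀ e ∈ G.edgeSet, e ∈ c₁.edges ∨ e ∈ c₂.edges) :
    G.girth = min c₁.length c₂.length := by
  obtain ⟨a, w, hw, hgirth⟩ := exists_girth_eq_length.mpr fun hG => hG c₁ h₁
  have := girth_le_length h₁
  have := girth_le_length h₂
  rcases hw.length_eq_or_length_eq h₁ h₂ hshare hedges with h | h <;> omega

theorem ncard_edgeSet_le_ncard_verts_of_ne_top [Finite V] (h₁ : c₁.IsCycle) (h₂ : c₂.IsCycle)
    (hshare : ∀ v, v ∈ c₁.support → v ∈ c₂.support → v = u)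
    (hedges : ∀ e ∈ G.edgeSet, e ∈ c₁.edges ∨ e ∈ c₂.edges)
    (hverts : ∀ v, v ∈ c₁.support ∨ v ∈ c₂.support) {H : G.Subgraph} (hH : H ≠ ⊤) :
    H.edgeSet.ncard ≤ H.verts.ncard := by
  obtain ⟨e₀, he₀G, he₀H⟩ := H.exists_notMem_edgeSet_of_ne_top
    (fun v => (hverts v).elim h₁.exists_adj h₂.exists_adj) hH
  wlog he₀ : e₀ ∈ c₁.edges generalizing c₁ c₂
  · exact this h₂ h₁ (fun v hv₂ hv₁ => hshare v hv₁ hv₂) (fun e he => (hedges e he).symm)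
      (fun v => (hverts v).symm) ((hedges e₀ he₀G).resolve_left he₀)
  have hdisj : Disjoint ((H.verts ∩ {v | v ∈ c₁.support}) \ {u}) (H.verts ∩ {v | v ∈ c₂.support}) :=
    Set.disjoint_left.mpr fun v hv₁ hv₂ => hv₁.2 (hshare v hv₁.1.2 hv₂.2)
  calc H.edgeSet.ncard
      ≤ (H.edgeSet ∩ {e | e ∈ c₁.edges} ∪ H.edgeSet ∩ {e | e ∈ c₂.edges}).ncard :=
        Set.ncard_le_ncard fun e he => (hedges e (H.edgeSet_subset he)).imp (⟨he, ·⟩) (⟨he, ·⟩)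
    _ ≤ (H.edgeSet ∩ {e | e ∈ c₁.edges}).ncard + (H.edgeSet ∩ {e | e ∈ c₂.edges}).ncard :=
        Set.ncard_union_le _ _
    _ ≤ ((H.verts ∩ {v | v ∈ c₁.support}) \ {u}).ncard + (H.verts ∩ {v | v ∈ c₂.support}).ncard :=
        add_le_add (h₁.ncard_edgeSet_inter_le_of_notMem he₀ he₀H) (h₂.ncard_edgeSet_inter_le H)
    _ = ((H.verts ∩ {v | v ∈ c₁.support}) \ {u} ∪ H.verts ∩ {v | v ∈ c₂.support}).ncard :=
        (Set.ncard_union_eq hdisj).symm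
    _ ≤ H.verts.ncard := Set.ncard_le_ncard (Set.union_subset (fun v hv => hv.1.1) fun v hv => hv.1)

end TwoCycles

end SimpleGraph

-- If `u` is coloured `2`, the lists force `3, 1, 3, …, 1` along `c₁` and leave only `2` for its
-- last vertex; if `u` is coloured `1`, the same happens along `c₂` with `4, 2, 4, …, 2`.
theorem SimpleGraph.not_choosable_two_of_even_cycles {V : Type} {G : SimpleGraph V} {u : V}
    {c₁ c₂ : G.Walk u u} (h₁ : c₁.IsCycle) (h₂ : c₂.IsCycle)
    (he₁ : Even c₁.length) (he₂ : Even c₂.length)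
    (hshare : ∀ v, v ∈ c₁.support → v ∈ c₂.support → v = u) :
    ¬ Choosable G 2 := by
  classical
  intro hch
  obtain ⟨f, hfL, hf⟩ := hch (fun v => if v = u then {1, 2} else if v ∈ c₁.support then
    c₁.cycleLists 2 3 1 v else c₂.cycleLists 1 4 2 v) fun v => by
      simp only [SimpleGraph.Walk.cycleLists]
      split_ifs <;> rfl
  have hfu : f u = 1 ∨ f u = 2 := by simpa using hfL u
  rcases hfu with hfu | hfu
  · refine h₂.not_proper_of_mem_cycleLists he₂ (p := 4) (q := 2) (fun v hv hvu => ?_) hf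
    have hv₁ : v ∉ c₁.support := fun hv₁ => hvu (hshare v hv₁ hv)
    simpa [hfu, hvu, hv₁] using hfL v
  · refine h₁.not_proper_of_mem_cycleLists he₁ (p := 3) (q := 1) (fun v hv hvu => ?_) hf
    simpa [hfu, hvu, hv] using hfL v

theorem stmt_7_general {V : Type} [Fintype V] (g : ℕ) (hge : Even g)
    (G : SimpleGraph V) (u : V) (c1 c2 : G.Walk u u)
    (h1 : c1.IsCycle) (h2 : c2.IsCycle)
    (hl1 : c1.length = g) (hl2 : c2.length = g)
    (hshare : ∀ v, v ∈ c1.support → v ∈ c2.support → v = u)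
    (hedges : ∀ e, e ∈ G.edgeSet ↔ e ∈ c1.edges ∨ e ∈ c2.edges)
    (hverts : ∀ v : V, v ∈ c1.support ∨ v ∈ c2.support) :
    G.Colorable 2 ∧ G.girth = g ∧ ¬ Choosable G 2 ∧
    ∀ H : G.Subgraph, H ≠ ⊤ →
      (2 * H.edgeSet.ncard : ℝ) / H.verts.ncard ≤ 2 := by
  have hedges' : ∀ e ∈ G.edgeSet, e ∈ c1.edges ∨ e ∈ c2.edges := fun e => (hedges e).mp
  have he1 : Even c1.length := hl1 ▸ hge
  have he2 : Even c2.length := hl2 ▸ hge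
  refine ⟨SimpleGraph.colorable_two_of_even_cycles h1 h2 he1 he2 hshare hedges', ?_,
    SimpleGraph.not_choosable_two_of_even_cycles h1 h2 he1 he2 hshare, fun H hH => ?_⟩
  · rw [SimpleGraph.girth_eq_min_length h1 h2 hshare hedges', hl1, hl2, min_self]
  · have hcard := SimpleGraph.ncard_edgeSet_le_ncard_verts_of_ne_top h1 h2 hshare hedges' hverts hH
    exact div_le_of_le_mul₀ (by positivity) zero_le_two (by norm_cast; omega)

/-- The graph consisting of two cycles of even length g ≥ 4 sharing exactly one
vertex is bipartite, has girth g, is not 2-choosable, and every proper subgraph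
has average degree at most 2. -/
theorem stmt_7 {V : Type} [Fintype V] (g : ℕ) (hg : 4 ≤ g) (hge : Even g)
    (G : SimpleGraph V) (u : V) (c1 c2 : G.Walk u u)
    (h1 : c1.IsCycle) (h2 : c2.IsCycle)
    (hl1 : c1.length = g) (hl2 : c2.length = g)
    (hshare : ∀ v, v ∈ c1.support → v ∈ c2.support → v = u)
    (hedges : ∀ e, e ∈ G.edgeSet ↔ e ∈ c1.edges ∨ e ∈ c2.edges)
    (hverts : ∀ v : V, v ∈ c1.support ∨ v ∈ c2.support) :
    G.Colorable 2 ∧ G.girth = g ∧ ¬ Choosable G 2 ∧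
    ∀ H : G.Subgraph, H ≠ ⊤ →
      (2 * H.edgeSet.ncard : ℝ) / H.verts.ncard ≤ 2 :=
  stmt_7_general g hge G u c1 c2 h1 h2 hl1 hl2 hshare hedges hverts
end

section
/- Let G be the graph consisting of two cycles of even length g ≥ 4 sharing exactly one vertex. Then there is an assignment L of lists of size 2 to the vertices of G such that G has no proper coloring chosen from L. Moreover, when g ≡ 4 (mod 6), the lists can be chosen so that adjacent lists intersect in exactly one color. -/
/-!
On each cycle `u = v₀, v₁, …, v_g = u` give `v_{i+1}` the list `{t i, t (i + 1)}`, where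
consecutive values of `t` differ and `t (g - 1) = t 0`, and give `u` the list `{t₁ 0, t₂ 0}`.
Whichever colour `tⱼ 0` the vertex `u` takes, the colouring along `cⱼ` is forced to be
`f vᵢ = tⱼ i`, so the neighbour `v_{g-1}` of `u` also gets `tⱼ 0`. For `g ≡ 4 (mod 6)` the
sequences `1, 3, 4, 1, 3, 4, …` and `2, 3, 4, 2, 3, 4, …` close up, since `3 ∣ g - 1`, and
make adjacent lists share exactly one colour.
-/

theorem Finset.card_pair_inter_pair {α : Type*} [DecidableEq α] {a c : α} (b : α) (h : a ≠ c) :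
    ({a, b} ∩ {b, c} : Finset α).card = 1 := by
  rw [Finset.card_eq_one]
  exact ⟨b, by ext; grind⟩

namespace SimpleGraph.Walk

variable {V α : Type*} {G : SimpleGraph V} {u v : V} {f : V → α} {t : ℕ → α}

theorem eq_of_forced_coloring (w : G.Walk u v) (hf : ∀ a b, G.Adj a b → f a ≠ f b) {n : ℕ}
    (hn : n ≤ w.length) (h0 : f u = t 0)
    (hmem : ∀ i < n, f (w.getVert (i + 1)) = t i ∨ f (w.getVert (i + 1)) = t (i + 1)) :
    ∀ i ≤ n, f (w.getVert i) = t i := by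
  intro i
  induction i with
  | zero => simpa using h0
  | succ i ih =>
    intro hi
    refine (hmem i hi).resolve_left fun h => ?_
    exact hf _ _ (w.adj_getVert_succ (by omega)) ((ih (by omega)).trans h.symm)

theorem apply_ne_of_forced_coloring (c : G.Walk u u) (hf : ∀ a b, G.Adj a b → f a ≠ f b)
    {n : ℕ} (hc : c.length = n + 1) (hend : t n = t 0)
    (hmem : ∀ i < n, f (c.getVert (i + 1)) = t i ∨ f (c.getVert (i + 1)) = t (i + 1)) :
    f u ≠ t 0 := by
  intro h0
  have hlast := c.eq_of_forced_coloring hf (by omega) h0 hmem n le_rfl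
  have hadj := c.adj_getVert_succ (i := n) (by omega)
  rw [← hc, c.getVert_length] at hadj
  exact hf _ _ hadj (by rw [hlast, hend, h0])

theorem IsCycle.idxOf_tail_support_getVert [DecidableEq V] {c : G.Walk u u} (hc : c.IsCycle)
    {i : ℕ} (hi : i < c.length) : c.support.tail.idxOf (c.getVert (i + 1)) = i := by
  have hlen : i < c.support.tail.length := by simpa using hi
  rw [c.getVert_eq_support_getElem hi, ← List.getElem_tail hlen]
  exact hc.support_nodup.idxOf_getElem i hlen

theorem card_inter_eq_one_of_mem_edges [DecidableEq α] (c : G.Walk u u) {L : V → Finset α}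
    {x : α} {n : ℕ} (hc : c.length = n + 1) (hn : n ≠ 0) (hu : L u = {x, t 0})
    (hL : ∀ i < n, L (c.getVert (i + 1)) = {t i, t (i + 1)}) (hend : t n = t 0)
    (hx : ∀ i, t i ≠ x) (ht : ∀ i, t i ≠ t (i + 2)) {a b : V} (hab : s(a, b) ∈ c.edges) :
    (L a ∩ L b).card = 1 := by
  have hstep : ∀ j < c.length, (L (c.getVert j) ∩ L (c.getVert (j + 1))).card = 1 := by
    rintro (_ | j) hj
    · rw [c.getVert_zero, hu, hL 0 (by omega)]
      exact Finset.card_pair_inter_pair _ (hx 1).symm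
    obtain rfl | hjn := eq_or_ne (j + 1) n
    · rw [← hc, c.getVert_length, hL j (by omega), hend, hu, Finset.pair_comm x]
      exact Finset.card_pair_inter_pair _ (hx j)
    · rw [hL j (by omega), hL (j + 1) (by omega)]
      exact Finset.card_pair_inter_pair _ (ht j)
  obtain ⟨j, hj, he⟩ := c.mk_mem_edges_iff_exists.1 hab
  rcases Sym2.eq_iff.1 he with ⟨rfl, rfl⟩ | ⟨rfl, rfl⟩
  · exact hstep j hj
  · rw [Finset.inter_comm]
    exact hstep j hj

end SimpleGraph.Walk

namespace SimpleGraph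

variable {V α : Type*} [DecidableEq V] [DecidableEq α] {G : SimpleGraph V} {u : V}

/-- `cⱼ.getVert (i + 1)` gets `{tⱼ i, tⱼ (i + 1)}`, with `i` read off `cⱼ.support.tail`. -/
def twoCycleLists (c₁ c₂ : G.Walk u u) (t₁ t₂ : ℕ → α) (v : V) : Finset α :=
  if v = u then {t₁ 0, t₂ 0}
  else if v ∈ c₁.support then {t₁ (c₁.support.tail.idxOf v), t₁ (c₁.support.tail.idxOf v + 1)}
  else {t₂ (c₂.support.tail.idxOf v), t₂ (c₂.support.tail.idxOf v + 1)}

variable {c₁ c₂ : G.Walk u u} {t₁ t₂ : ℕ → α}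

theorem twoCycleLists_self : twoCycleLists c₁ c₂ t₁ t₂ u = {t₁ 0, t₂ 0} :=
  if_pos rfl

theorem twoCycleLists_getVert_left (hc₁ : c₁.IsCycle) {i : ℕ} (hi : i + 1 < c₁.length) :
    twoCycleLists c₁ c₂ t₁ t₂ (c₁.getVert (i + 1)) = {t₁ i, t₁ (i + 1)} := by
  have hne : c₁.getVert (i + 1) ≠ u := by rw [Ne, hc₁.getVert_endpoint_iff hi.le]; omega
  rw [twoCycleLists, if_neg hne, if_pos (c₁.getVert_mem_support _),
    hc₁.idxOf_tail_support_getVert (by omega)]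

theorem twoCycleLists_getVert_right (hc₂ : c₂.IsCycle)
    (hshare : ∀ v, v ∈ c₁.support → v ∈ c₂.support → v = u) {i : ℕ} (hi : i + 1 < c₂.length) :
    twoCycleLists c₁ c₂ t₁ t₂ (c₂.getVert (i + 1)) = {t₂ i, t₂ (i + 1)} := by
  have hne : c₂.getVert (i + 1) ≠ u := by rw [Ne, hc₂.getVert_endpoint_iff hi.le]; omega
  have hnmem : c₂.getVert (i + 1) ∉ c₁.support := fun h =>
    hne (hshare _ h (c₂.getVert_mem_support _))
  rw [twoCycleLists, if_neg hne, if_neg hnmem, hc₂.idxOf_tail_support_getVert (by omega)]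

theorem card_twoCycleLists (h₀ : t₁ 0 ≠ t₂ 0) (h₁ : ∀ i, t₁ i ≠ t₁ (i + 1))
    (h₂ : ∀ i, t₂ i ≠ t₂ (i + 1)) (v : V) : (twoCycleLists c₁ c₂ t₁ t₂ v).card = 2 := by
  unfold twoCycleLists
  split_ifs
  exacts [Finset.card_pair h₀, Finset.card_pair (h₁ _), Finset.card_pair (h₂ _)]

theorem not_exists_coloring_twoCycleLists (hc₁ : c₁.IsCycle) (hc₂ : c₂.IsCycle)
    (hshare : ∀ v, v ∈ c₁.support → v ∈ c₂.support → v = u) {m n : ℕ}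
    (hl₁ : c₁.length = m + 1) (hl₂ : c₂.length = n + 1) (hend₁ : t₁ m = t₁ 0)
    (hend₂ : t₂ n = t₂ 0) :
    ¬∃ f : V → α, (∀ v, f v ∈ twoCycleLists c₁ c₂ t₁ t₂ v) ∧ ∀ a b, G.Adj a b → f a ≠ f b := by
  rintro ⟨f, hfL, hf⟩
  have hu := hfL u
  rw [twoCycleLists_self, Finset.mem_insert, Finset.mem_singleton] at hu
  rcases hu with hu | hu
  · refine c₁.apply_ne_of_forced_coloring hf hl₁ hend₁ (fun i hi => ?_) hu
    simpa [twoCycleLists_getVert_left hc₁ (by omega : i + 1 < c₁.length)] using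
      hfL (c₁.getVert (i + 1))
  · refine c₂.apply_ne_of_forced_coloring hf hl₂ hend₂ (fun i hi => ?_) hu
    simpa [twoCycleLists_getVert_right hc₂ hshare (by omega : i + 1 < c₂.length)] using
      hfL (c₂.getVert (i + 1))

end SimpleGraph

open SimpleGraph

def closingColors (n c i : ℕ) : ℕ := if i = 0 ∨ i = n then c else i + 2

theorem closingColors_ne_succ {n c : ℕ} (hn : 2 ≤ n) (hc : c < 2) (i : ℕ) :
    closingColors n c i ≠ closingColors n c (i + 1) := by
  unfold closingColors
  grind

theorem closingColors_self (n c : ℕ) : closingColors n c n = closingColors n c 0 := by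
  simp [closingColors]

def rotatingColors (c i : ℕ) : ℕ := if i % 3 = 0 then c else if i % 3 = 1 then 3 else 4

theorem rotatingColors_ne_add {c k : ℕ} (hc : c < 3) (hk : k % 3 ≠ 0) (i : ℕ) :
    rotatingColors c i ≠ rotatingColors c (i + k) := by
  unfold rotatingColors
  split_ifs <;> omega

theorem rotatingColors_ne {c d : ℕ} (hd : d < 3) (hcd : c ≠ d) (i : ℕ) :
    rotatingColors c i ≠ d := by
  unfold rotatingColors
  split_ifs <;> omega

theorem rotatingColors_of_mod_three {c i : ℕ} (hi : i % 3 = 0) : rotatingColors c i = c :=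
  if_pos hi

theorem stmt_8_general {V : Type} (g : ℕ) (hg : 4 ≤ g)
    (G : SimpleGraph V) (u : V) (c1 c2 : G.Walk u u)
    (h1 : c1.IsCycle) (h2 : c2.IsCycle)
    (hl1 : c1.length = g) (hl2 : c2.length = g)
    (hshare : ∀ v, v ∈ c1.support → v ∈ c2.support → v = u)
    (hedges : ∀ e, e ∈ G.edgeSet ↔ e ∈ c1.edges ∨ e ∈ c2.edges) :
    (∃ L : V → Finset ℕ, (∀ v, (L v).card = 2) ∧
      ¬∃ f : V → ℕ, (∀ v, f v ∈ L v) ∧ ∀ a b, G.Adj a b → f a ≠ f b) ∧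
    (g % 6 = 4 →
      ∃ L : V → Finset ℕ, (∀ v, (L v).card = 2) ∧
        (∀ a b, G.Adj a b → (L a ∩ L b).card = 1) ∧
        ¬∃ f : V → ℕ, (∀ v, f v ∈ L v) ∧ ∀ a b, G.Adj a b → f a ≠ f b) := by
  classical
  obtain ⟨n, rfl⟩ : ∃ n, g = n + 1 := ⟨g - 1, by omega⟩
  refine ⟨⟨twoCycleLists c1 c2 (closingColors n 0) (closingColors n 1), ?_, ?_⟩, fun hmod => ?_⟩
  · exact card_twoCycleLists (by simp [closingColors])
      (closingColors_ne_succ (by omega) (by omega)) (closingColors_ne_succ (by omega) (by omega))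
  · exact not_exists_coloring_twoCycleLists h1 h2 hshare hl1 hl2
      (closingColors_self n 0) (closingColors_self n 1)
  have hend (c : ℕ) : rotatingColors c n = rotatingColors c 0 := by
    rw [rotatingColors_of_mod_three (by omega), rotatingColors_of_mod_three (by omega)]
  refine ⟨twoCycleLists c1 c2 (rotatingColors 1) (rotatingColors 2), ?_, fun a b hab => ?_,
    not_exists_coloring_twoCycleLists h1 h2 hshare hl1 hl2 (hend 1) (hend 2)⟩
  · exact card_twoCycleLists (by decide) (rotatingColors_ne_add (by omega) (by omega))
      (rotatingColors_ne_add (by omega) (by omega))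
  have hu : twoCycleLists c1 c2 (rotatingColors 1) (rotatingColors 2) u = {1, 2} :=
    twoCycleLists_self
  rcases (hedges s(a, b)).1 hab with hab | hab
  · refine c1.card_inter_eq_one_of_mem_edges (x := 2) hl1 (by omega)
      (hu.trans (Finset.pair_comm _ _))
      (fun i hi => twoCycleLists_getVert_left h1 (by omega)) (hend 1)
      (rotatingColors_ne (by omega) (by omega)) (rotatingColors_ne_add (by omega) (by omega)) hab
  · exact c2.card_inter_eq_one_of_mem_edges (x := 1) hl2 (by omega) hu
      (fun i hi => twoCycleLists_getVert_right h2 hshare (by omega)) (hend 2)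
      (rotatingColors_ne (by omega) (by omega)) (rotatingColors_ne_add (by omega) (by omega)) hab

/-- For the graph consisting of two cycles of even length g ≥ 4 sharing exactly
one vertex, there is a 2-list assignment with no proper coloring; moreover if
g ≡ 4 (mod 6) the lists can be chosen so that adjacent lists intersect in exactly
one color. -/
theorem stmt_8 {V : Type} [Fintype V] (g : ℕ) (hg : 4 ≤ g) (hge : Even g)
    (G : SimpleGraph V) (u : V) (c1 c2 : G.Walk u u)
    (h1 : c1.IsCycle) (h2 : c2.IsCycle)
    (hl1 : c1.length = g) (hl2 : c2.length = g)
    (hshare : ∀ v, v ∈ c1.support → v ∈ c2.support → v = u)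
    (hedges : ∀ e, e ∈ G.edgeSet ↔ e ∈ c1.edges ∨ e ∈ c2.edges)
    (hverts : ∀ v : V, v ∈ c1.support ∨ v ∈ c2.support) :
    (∃ L : V → Finset ℕ, (∀ v, (L v).card = 2) ∧
      ¬∃ f : V → ℕ, (∀ v, f v ∈ L v) ∧ ∀ a b, G.Adj a b → f a ≠ f b) ∧
    (g % 6 = 4 →
      ∃ L : V → Finset ℕ, (∀ v, (L v).card = 2) ∧
        (∀ a b, G.Adj a b → (L a ∩ L b).card = 1) ∧
        ¬∃ f : V → ℕ, (∀ v, f v ∈ L v) ∧ ∀ a b, G.Adj a b → f a ≠ f b) :=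
  stmt_8_general g hg G u c1 c2 h1 h2 hl1 hl2 hshare hedges
end

section
/- Every finite digraph with no directed odd cycle has a kernel. -/
/-!
A shortest odd closed walk is an odd cycle, so closed walks have even length. Induct on the vertex
set `S`. Pick a vertex `v₀` that can return from everywhere it reaches in `S`; the set `C` of
those vertices is closed under out-arcs in `S`, and since closed walks through `v₀` are even, the
parity of a walk from `v₀` to `u` depends only on `u`. The vertices at even distance form a kernel
of `C`. Remove `C` together with the in-neighbours of this kernel; a kernel of what is left,
which exists by induction, completes it to a kernel of `S`.
-/

open Relation

variable {V : Type*}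

section OddCycles

variable {D : V → V → Prop}

def IsClosedWalk {n : ℕ} (D : V → V → Prop) (c : ZMod n → V) : Prop :=
  ∀ i, D (c i) (c (i + 1))

def HasOddCycle (D : V → V → Prop) : Prop :=
  ∃ (n : ℕ) (_ : Odd n) (c : ZMod n → V), Function.Injective c ∧ IsClosedWalk D c

theorem isClosedWalk_of_nat {n : ℕ} [NeZero n] {f : ℕ → V}
    (hf : ∀ i < n, D (f i) (f (i + 1))) (hclosed : f n = f 0) :
    IsClosedWalk D (fun i : ZMod n => f i.val) := by
  intro i
  have hi := ZMod.val_lt i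
  rcases Nat.lt_or_ge (i.val + 1) n with h | h
  · have hval : (i + 1).val = i.val + 1 := by
      rw [ZMod.val_add, ZMod.val_one_eq_one_mod, Nat.mod_eq_of_lt (by omega : 1 < n),
        Nat.mod_eq_of_lt h]
    simpa only [hval] using hf i.val hi
  · have hlast : i + 1 = 0 := by
      rw [← ZMod.natCast_zmod_val i, ← Nat.cast_add_one, show i.val + 1 = n by omega,
        ZMod.natCast_self]
    simpa only [hlast, ZMod.val_zero, ← hclosed, show i.val + 1 = n by omega] using hf i.val hi

theorem IsClosedWalk.segment {n : ℕ} {c : ZMod n → V} (hc : IsClosedWalk D c) (a : ZMod n)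
    (d : ℕ) [NeZero d] (h : c (a + d) = c a) :
    IsClosedWalk D (fun k : ZMod d => c (a + k.val)) :=
  isClosedWalk_of_nat (f := fun k : ℕ => c (a + k))
    (fun i _ => by simpa only [Nat.cast_succ, add_assoc] using hc (a + i)) (by simpa using h)

/-- A repeated vertex splits an odd closed walk into two shorter closed walks, one of them odd. -/
theorem IsClosedWalk.hasOddCycle {n : ℕ} (hn : Odd n) {c : ZMod n → V}
    (hc : IsClosedWalk D c) : HasOddCycle D := by
  induction n using Nat.strong_induction_on with
  | _ n ih =>
  have : NeZero n := ⟨hn.pos.ne'⟩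
  by_cases hinj : Function.Injective c
  · exact ⟨n, hn, c, hinj, hc⟩
  obtain ⟨i, j, hij, hne⟩ : ∃ i j, c i = c j ∧ i ≠ j := by
    simpa [Function.Injective] using hinj
  set d := (j - i).val with hd
  have hd0 : d ≠ 0 := by simpa [hd, ZMod.val_eq_zero, sub_eq_zero] using hne.symm
  have hdn : d < n := ZMod.val_lt _
  have hi : c (i + d) = c i := by
    rw [hd, ZMod.natCast_zmod_val, add_sub_cancel, hij]
  have hj : c (j + (n - d : ℕ)) = c j := by
    rw [Nat.cast_sub hdn.le, ZMod.natCast_self, hd, ZMod.natCast_zmod_val, zero_sub,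
      ← sub_eq_add_neg, sub_sub_cancel, hij]
  rcases Nat.even_or_odd d with heven | hodd
  · have : NeZero (n - d) := ⟨by omega⟩
    exact ih (n - d) (by omega) (Nat.Odd.sub_even hdn.le hn heven) (hc.segment j (n - d) hj)
  · have : NeZero d := ⟨hd0⟩
    exact ih d hdn hodd (hc.segment i d hi)

end OddCycles

section ParityLift

variable {R : V → V → Prop}

/-- Walks in `parityLift R` are walks in `R` that also record their length modulo 2. -/
def parityLift (R : V → V → Prop) : V × ZMod 2 → V × ZMod 2 → Prop :=
  fun x y => R x.1 y.1 ∧ y.2 = x.2 + 1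

theorem Relation.ReflTransGen.of_parityLift {x y : V × ZMod 2}
    (h : ReflTransGen (parityLift R) x y) : ReflTransGen R x.1 y.1 :=
  h.lift Prod.fst fun _ _ hxy => hxy.1

theorem Relation.ReflTransGen.exists_parityLift {a b : V} (h : ReflTransGen R a b) :
    ∃ p : ZMod 2, ∀ q, ReflTransGen (parityLift R) (a, q) (b, q + p) := by
  induction h with
  | refl => exact ⟨0, fun q => by simpa using ReflTransGen.refl⟩
  | tail _ hbc ih =>
    obtain ⟨p, hp⟩ := ih
    exact ⟨p + 1, fun q => (hp q).tail ⟨hbc, by ring⟩⟩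

theorem Relation.ReflTransGen.exists_walk_of_parityLift {x y : V × ZMod 2}
    (h : ReflTransGen (parityLift R) x y) :
    ∃ (n : ℕ) (f : ℕ → V), f 0 = x.1 ∧ f n = y.1 ∧ (n : ZMod 2) = y.2 - x.2 ∧
      ∀ i < n, R (f i) (f (i + 1)) := by
  induction h using ReflTransGen.head_induction_on with
  | refl => exact ⟨0, fun _ => y.1, rfl, rfl, by simp, by simp⟩
  | head hxz _ ih =>
    obtain ⟨n, f, hf0, hfn, hpar, hstep⟩ := ih
    refine ⟨n + 1, fun | 0 => _ | k + 1 => f k, rfl, hfn, ?_, ?_⟩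
    · rw [Nat.cast_succ, hpar, hxz.2]
      ring
    · rintro (_ | i) hi
      · simpa [hf0] using hxz.1
      · exact hstep i (by omega)

theorem not_reflTransGen_parityLift (h : ¬ HasOddCycle R) (v : V) :
    ¬ ReflTransGen (parityLift R) (v, 0) (v, 1) := by
  intro hw
  obtain ⟨n, f, hf0, hfn, hpar, hstep⟩ := hw.exists_walk_of_parityLift
  have hn : Odd n := ZMod.natCast_eq_one_iff_odd.mp (by simpa using hpar)
  have : NeZero n := ⟨hn.pos.ne'⟩
  exact h ((isClosedWalk_of_nat hstep (hfn.trans hf0.symm)).hasOddCycle hn)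

end ParityLift

section Kernels

variable {D : V → V → Prop}

def IsKernelIn (D : V → V → Prop) (S K : Set V) : Prop :=
  K ⊆ S ∧ (∀ a ∈ K, ∀ b ∈ K, ¬ D a b) ∧ ∀ v ∈ S, v ∉ K → ∃ w ∈ K, D v w

theorem IsKernelIn.of_restrict {S T K : Set V} (h : IsKernelIn (fun a b => D a b ∧ b ∈ S) T K)
    (hTS : T ⊆ S) : IsKernelIn D T K := by
  obtain ⟨hKT, hind, hdom⟩ := h
  refine ⟨hKT, fun a ha b hb hab => hind a ha b hb ⟨hab, hTS (hKT hb)⟩, fun v hv hvK => ?_⟩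
  obtain ⟨w, hw, hvw, -⟩ := hdom v hv hvK
  exact ⟨w, hw, hvw⟩

theorem IsKernelIn.union {S C K₁ K₂ : Set V} (hCS : C ⊆ S)
    (hC : ∀ a ∈ C, ∀ b ∈ S, D a b → b ∈ C) (h₁ : IsKernelIn D C K₁)
    (h₂ : IsKernelIn D {v ∈ S | v ∉ C ∧ ∀ w ∈ K₁, ¬ D v w} K₂) :
    IsKernelIn D S (K₁ ∪ K₂) := by
  obtain ⟨hK₁, hind₁, hdom₁⟩ := h₁
  obtain ⟨hK₂, hind₂, hdom₂⟩ := h₂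
  refine ⟨Set.union_subset (hK₁.trans hCS) fun v hv => (hK₂ hv).1, ?_, ?_⟩
  · rintro a (ha | ha) b (hb | hb) hab
    · exact hind₁ a ha b hb hab
    · exact (hK₂ hb).2.1 (hC a (hK₁ ha) b (hK₂ hb).1 hab)
    · exact (hK₂ ha).2.2 b hb hab
    · exact hind₂ a ha b hb hab
  · intro v hv hvK
    by_cases hvC : v ∈ C
    · obtain ⟨w, hw, hvw⟩ := hdom₁ v hvC fun h => hvK (Or.inl h)
      exact ⟨w, Or.inl hw, hvw⟩
    by_cases hdom : ∃ w ∈ K₁, D v w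
    · obtain ⟨w, hw, hvw⟩ := hdom
      exact ⟨w, Or.inl hw, hvw⟩
    push Not at hdom
    obtain ⟨w, hw, hvw⟩ := hdom₂ v ⟨hv, hvC, hdom⟩ fun h => hvK (Or.inr h)
    exact ⟨w, Or.inr hw, hvw⟩

/-- Without odd closed walks through `v₀`, the parity of a walk from `v₀` to `u` depends only
on `u`. -/
theorem isKernelIn_even_from {v₀ : V}
    (hret : ∀ u, ReflTransGen D v₀ u → ReflTransGen D u v₀)
    (hodd : ¬ ReflTransGen (parityLift D) (v₀, 0) (v₀, 1)) :
    IsKernelIn D {u | ReflTransGen D v₀ u} {u | ReflTransGen (parityLift D) (v₀, 0) (u, 0)} := by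
  refine ⟨fun u hu => ReflTransGen.of_parityLift hu, fun a ha b hb hab => ?_,
    fun u hu huK => ?_⟩
  · obtain ⟨p, hp⟩ := (hret b (ReflTransGen.of_parityLift hb)).exists_parityLift
    have hb₁ : ReflTransGen (parityLift D) (v₀, 0) (b, 1) := ha.tail ⟨hab, by simp⟩
    obtain rfl | rfl := (by decide : ∀ p : ZMod 2, p = 0 ∨ p = 1) p
    · exact hodd (hb₁.trans (hp 1))
    · exact hodd (hb.trans (hp 0))
  · obtain ⟨p, hp⟩ := ReflTransGen.exists_parityLift hu
    have hu₁ : ReflTransGen (parityLift D) (v₀, 0) (u, 1) := by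
      obtain rfl | rfl := (by decide : ∀ p : ZMod 2, p = 0 ∨ p = 1) p
      · exact absurd (hp 0) huK
      · exact hp 0
    rcases (hret u hu).cases_head with rfl | ⟨w, huw, -⟩
    · exact absurd ReflTransGen.refl huK
    · exact ⟨w, hu₁.tail ⟨huw, rfl⟩, huw⟩

theorem Relation.exists_reflTransGen_forall_return [Finite V] (R : V → V → Prop) (v : V) :
    ∃ v₀, ReflTransGen R v v₀ ∧ ∀ u, ReflTransGen R v₀ u → ReflTransGen R u v₀ := by
  obtain ⟨v₀, hvv₀, hmin⟩ := exists_minimalFor_of_wellFoundedLT (ReflTransGen R v)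
    (fun w => {u | ReflTransGen R w u}) ⟨v, ReflTransGen.refl⟩
  -- the set reachable from `v₀` is ⊆-minimal, so every `u` it contains reaches all of it
  refine ⟨v₀, hvv₀, fun u hu => ?_⟩
  exact hmin (hvv₀.trans hu) (fun x hx => hu.trans hx) ReflTransGen.refl

theorem exists_isKernelIn [Finite V] (hD : ∀ v, ¬ ReflTransGen (parityLift D) (v, 0) (v, 1))
    (S : Set V) : ∃ K, IsKernelIn D S K := by
  induction S using WellFoundedLT.induction with
  | _ S ih =>
  rcases S.eq_empty_or_nonempty with rfl | ⟨v, hv⟩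
  · exact ⟨∅, by simp [IsKernelIn]⟩
  set R : V → V → Prop := fun a b => D a b ∧ b ∈ S
  have hRS : ∀ {a b}, ReflTransGen R a b → a ∈ S → b ∈ S := fun hab ha => by
    rcases hab.cases_tail with rfl | ⟨_, -, -, hb⟩
    exacts [ha, hb]
  obtain ⟨v₀, hvv₀, hret⟩ := exists_reflTransGen_forall_return R v
  set C := {u | ReflTransGen R v₀ u}
  have hCS : C ⊆ S := fun u hu => hRS hu (hRS hvv₀ hv)
  have hCclosed : ∀ a ∈ C, ∀ b ∈ S, D a b → b ∈ C := fun a ha b hb hab =>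
    ReflTransGen.tail ha ⟨hab, hb⟩
  set K₁ := {u | ReflTransGen (parityLift R) (v₀, 0) (u, 0)}
  have hK₁ : IsKernelIn D C K₁ :=
    (isKernelIn_even_from hret fun h =>
      hD v₀ (ReflTransGen.mono (fun _ _ hxy => ⟨hxy.1.1, hxy.2⟩) _ _ h)).of_restrict hCS
  obtain ⟨K₂, hK₂⟩ := ih {u ∈ S | u ∉ C ∧ ∀ w ∈ K₁, ¬ D u w}
    (Set.ssubset_iff_of_subset (fun _ hu => hu.1) |>.2
      ⟨v₀, hCS ReflTransGen.refl, fun h => h.2.1 ReflTransGen.refl⟩)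
  exact ⟨_, hK₁.union hCS hCclosed hK₂⟩

end Kernels

/-- Richardson's theorem (odd-cycle-free case): every finite digraph with no
directed odd cycle has a kernel. -/
theorem stmt_13 {V : Type} [Fintype V] (D : V → V → Prop)
    (hodd : ¬ ∃ (n : ℕ) (_ : Odd n) (c : ZMod n → V),
      Function.Injective c ∧ ∀ i, D (c i) (c (i + 1))) :
    ∃ K : Set V, (∀ a ∈ K, ∀ b ∈ K, ¬ D a b) ∧ ∀ v, v ∉ K → ∃ w ∈ K, D v w := by
  obtain ⟨K, -, hind, hdom⟩ := exists_isKernelIn (not_reflTransGen_parityLift hodd) Set.univ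
  exact ⟨K, hind, fun v hv => hdom v trivial hv⟩
end
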